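/- arXiv:2605.03379 — 4 statements merged into one kernel-verified Lean document; each statement's English description precedes it below -/
import Mathlib

section
/- Fix n ≥ 1 and a feasible pair (μ, ν) with 0 ≤ μ ≤ 1 and μ² ≤ ν ≤ μ. Consider the supremum U_n(μ,ν) and infimum L_n(μ,ν) of ∫ P_n(q) dπ(q) over all probability measures π on [0,1] with ∫ q dπ = μ and ∫ q² dπ = ν. Then both extrema are attained, and each is attained by a probability measure supported on at most three points of [0,1]. -/
open MeasureTheory

/-- The strict-majority success probability over `2n+1` conditionally independent calls at
latent success probability `q`: `P_n(q) = P(Binomial(2n+1, q) ≥ n+1)`. -/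
noncomputable def Pmaj (n : ℕ) (q : ℝ) : ℝ :=
  ∑ ℓ ∈ Finset.Icc (n + 1) (2 * n + 1),
    ((2 * n + 1).choose ℓ : ℝ) * q ^ ℓ * (1 - q) ^ (2 * n + 1 - ℓ)

/-- The two-moment class `M(μ,ν)`: probability measures on `[0,1]` with first moment `μ`
and second moment `ν`. -/
def momentClass (μ ν : ℝ) : Set (Measure ℝ) :=
  {π | IsProbabilityMeasure π ∧ π ((Set.Icc (0 : ℝ) 1)ᶜ) = 0 ∧
    (∫ q, q ∂π) = μ ∧ (∫ q, q ^ 2 ∂π) = ν}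

def voteVals (n : ℕ) (μ ν : ℝ) : Set ℝ :=
  {x | ∃ π ∈ momentClass μ ν, (∫ q, Pmaj n q ∂π) = x}

/-!
Push `π` along the moment curve `q ↦ (q, q², f q)`: the point `(μ, ν, ∫ f dπ)` lies in the
convex hull `K` of the curve over `[0,1]`, which is compact (Carathéodory). So all values
`∫ f dπ` lie in the compact fiber of `K` over `(μ, ν)`, whose largest and smallest points are not
interior to `K`. By Carathéodory a point of `K` is a positive combination of at most four
affinely independent curve points; four of them would span `ℝ³` and put the point in the
interior. So an extremal point of the fiber is a convex combination of at most three curve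
points, i.e. the image of a measure with at most three atoms and moments `(μ, ν)`.
-/

open Set Module Topology

universe u

lemma AffineIndependent.card_le_finrank_add_one {k V P ι : Type*} [DivisionRing k]
    [AddCommGroup V] [Module k V] [AddTorsor V P] [FiniteDimensional k V] [Fintype ι]
    {p : ι → P} (hp : AffineIndependent k p) : Fintype.card ι ≤ finrank k V + 1 :=
  hp.card_le_finrank_succ.trans (Nat.add_le_add_right (Submodule.finrank_le _) 1)

theorem convexHull_eq_image_stdSimplex {𝕜 E : Type*} [Field 𝕜] [LinearOrder 𝕜]
    [IsStrictOrderedRing 𝕜] [AddCommGroup E] [Module 𝕜 E] [FiniteDimensional 𝕜 E] {s : Set E}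
    (hs : s.Nonempty) :
    convexHull 𝕜 s = (fun p : (Fin (finrank 𝕜 E + 1) → 𝕜) × (Fin (finrank 𝕜 E + 1) → E) =>
      ∑ i, p.1 i • p.2 i) '' (stdSimplex 𝕜 _ ×ˢ univ.pi fun _ => s) := by
  classical
  refine subset_antisymm (fun x hx => ?_) ?_
  · obtain ⟨ι, _, z, w, hzs, hz, hw0, hw1, hwz⟩ := eq_pos_convex_span_of_mem_convexHull hx
    -- Pad the Carathéodory combination with zero weights at a fixed point of `s`.
    obtain ⟨e⟩ : Nonempty (ι ↪ Fin (finrank 𝕜 E + 1)) :=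
      Function.Embedding.nonempty_of_card_le (by simpa using hz.card_le_finrank_add_one)
    have hW (j) (hj : j ∉ range e) : Function.extend e w 0 j = 0 :=
      Function.extend_apply' _ _ _ (by simpa using hj)
    refine ⟨(Function.extend e w 0, Function.extend e z fun _ => hs.some), ⟨⟨fun j => ?_, ?_⟩,
      fun j _ => ?_⟩, ?_⟩
    · by_cases hj : j ∈ range e
      · obtain ⟨i, rfl⟩ := hj
        simpa [e.injective.extend_apply] using (hw0 i).le
      · simp [hW j hj]
    · rw [← hw1]
      exact (Fintype.sum_of_injective e e.injective _ _ hW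
        fun i => (e.injective.extend_apply _ _ _).symm).symm
    · by_cases hj : j ∈ range e
      · obtain ⟨i, rfl⟩ := hj
        simpa [e.injective.extend_apply] using hzs (mem_range_self i)
      · simpa [Function.extend_apply' _ _ _ (by simpa using hj)] using hs.some_mem
    · rw [← hwz]
      exact (Fintype.sum_of_injective e e.injective _ _ (fun j hj => by simp [hW j hj])
        fun i => by simp [e.injective.extend_apply]).symm
  · rintro _ ⟨⟨w, z⟩, ⟨⟨hw0, hw1⟩, hz⟩, rfl⟩
    exact mem_convexHull_of_exists_fintype w z hw0 hw1 (fun i => hz i (mem_univ i)) rfl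

theorem IsCompact.convexHull {E : Type*} [NormedAddCommGroup E] [NormedSpace ℝ E]
    [FiniteDimensional ℝ E] {s : Set E} (hs : IsCompact s) : IsCompact (convexHull ℝ s) := by
  rcases s.eq_empty_or_nonempty with rfl | hne
  · simp
  rw [convexHull_eq_image_stdSimplex hne]
  exact ((isCompact_stdSimplex ℝ _).prod (isCompact_univ_pi fun _ => hs)).image (by fun_prop)

theorem exists_convexCombination_card_le_finrank_or_mem_interior {E : Type u}
    [NormedAddCommGroup E] [NormedSpace ℝ E] [FiniteDimensional ℝ E] {s : Set E} {x : E}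
    (hx : x ∈ convexHull ℝ s) :
    (∃ (ι : Type u) (_ : Fintype ι) (z : ι → E) (w : ι → ℝ), Fintype.card ι ≤ finrank ℝ E ∧
      range z ⊆ s ∧ (∀ i, 0 ≤ w i) ∧ ∑ i, w i = 1 ∧ ∑ i, w i • z i = x) ∨
    x ∈ interior (convexHull ℝ s) := by
  obtain ⟨ι, _, z, w, hzs, hz, hw0, hw1, hwz⟩ := eq_pos_convex_span_of_mem_convexHull hx
  by_cases hcard : Fintype.card ι ≤ finrank ℝ E
  · exact .inl ⟨ι, _, z, w, hcard, hzs, fun i => (hw0 i).le, hw1, hwz⟩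
  right
  -- `finrank + 1` affinely independent points form an affine basis, in which `x` has positive
  -- barycentric coordinates.
  have hspan : affineSpan ℝ (range z) = ⊤ :=
    hz.affineSpan_eq_top_iff_card_eq_finrank_add_one.2
      (le_antisymm hz.card_le_finrank_add_one (by omega))
  let b : AffineBasis ι ℝ E := ⟨z, hz, hspan⟩
  have hxb : x = Finset.univ.affineCombination ℝ b w := by
    rw [Finset.affineCombination_eq_linear_combination _ _ _ hw1, ← hwz]; rfl
  refine interior_mono (convexHull_mono hzs) ?_
  change x ∈ interior (convexHull ℝ (range b))
  rw [b.interior_convexHull]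
  intro i
  rw [hxb, b.coord_apply_combination_of_mem (Finset.mem_univ i) hw1]
  exact hw0 i

section WeightedDirac

variable {α ι : Type*} [MeasurableSpace α] [Fintype ι]

noncomputable def weightedDirac (w : ι → ℝ) (x : ι → α) : Measure α :=
  ∑ i, ENNReal.ofReal (w i) • Measure.dirac (x i)

variable [MeasurableSingletonClass α] {w : ι → ℝ} {x : ι → α}

lemma weightedDirac_apply (s : Set α) :
    weightedDirac w x s = ∑ i, ENNReal.ofReal (w i) * s.indicator 1 (x i) := by
  simp [weightedDirac, Measure.finsetSum_apply, Measure.dirac_apply]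

lemma isProbabilityMeasure_weightedDirac (hw : ∀ i, 0 ≤ w i) (hw1 : ∑ i, w i = 1) :
    IsProbabilityMeasure (weightedDirac w x) := by
  constructor
  rw [weightedDirac_apply, ← ENNReal.ofReal_one, ← hw1,
    ENNReal.ofReal_sum_of_nonneg fun i _ => hw i]
  simp

lemma weightedDirac_compl_eq_zero {s : Set α} (hx : ∀ i, x i ∈ s) :
    weightedDirac w x sᶜ = 0 := by
  simp [weightedDirac_apply, hx]

lemma integral_weightedDirac {E : Type*} [NormedAddCommGroup E] [NormedSpace ℝ E]
    [CompleteSpace E] (hw : ∀ i, 0 ≤ w i) (f : α → E) :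
    ∫ a, f a ∂weightedDirac w x = ∑ i, w i • f (x i) := by
  rw [weightedDirac, integral_finsetSum_measure fun i _ =>
    (integrable_dirac enorm_lt_top).smul_measure ENNReal.ofReal_ne_top]
  simp [integral_smul_measure, ENNReal.toReal_ofReal (hw _)]

end WeightedDirac

lemma notMem_interior_of_mem_upperBounds {α : Type*} [TopologicalSpace α] [Preorder α]
    {s : Set α} {a : α} [(𝓝[>] a).NeBot] (ha : a ∈ upperBounds s) : a ∉ interior s := fun h =>
  have ⟨_, hab, hb⟩ :=
    ((frequently_gt_nhds a).and_eventually (mem_interior_iff_mem_nhds.1 h)).exists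
  (ha hb).not_gt hab

lemma notMem_interior_of_mem_lowerBounds {α : Type*} [TopologicalSpace α] [Preorder α]
    {s : Set α} {a : α} [(𝓝[<] a).NeBot] (ha : a ∈ lowerBounds s) : a ∉ interior s := fun h =>
  have ⟨_, hab, hb⟩ :=
    ((frequently_lt_nhds a).and_eventually (mem_interior_iff_mem_nhds.1 h)).exists
  (ha hb).not_gt hab

section MomentHull

variable {f : ℝ → ℝ} {μ ν : ℝ}

def momentCurve (f : ℝ → ℝ) (q : ℝ) : ℝ × ℝ × ℝ := (q, q ^ 2, f q)

def momentHull (f : ℝ → ℝ) : Set (ℝ × ℝ × ℝ) := convexHull ℝ (momentCurve f '' Icc 0 1)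

def momentFiber (f : ℝ → ℝ) (μ ν : ℝ) : Set ℝ := {y | (μ, ν, y) ∈ momentHull f}

def momentValues (f : ℝ → ℝ) (μ ν : ℝ) : Set ℝ :=
  {x | ∃ π ∈ momentClass μ ν, ∫ q, f q ∂π = x}

lemma isCompact_momentHull (hf : Continuous f) : IsCompact (momentHull f) :=
  (isCompact_Icc.image (by unfold momentCurve; fun_prop)).convexHull

lemma isCompact_momentFiber (hf : Continuous f) : IsCompact (momentFiber f μ ν) := by
  have : Isometry fun y : ℝ => (μ, ν, y) := Isometry.of_dist_eq fun _ _ => by simp [Prod.dist_eq]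
  exact this.isClosedEmbedding.isCompact_preimage (isCompact_momentHull hf)

lemma integrable_of_mem_momentClass {E : Type*} [NormedAddCommGroup E] {g : ℝ → E}
    (hg : Continuous g) {π : Measure ℝ} (hπ : π ∈ momentClass μ ν) : Integrable g π := by
  have := hπ.1
  rw [← Measure.restrict_eq_self_of_ae_mem (mem_ae_iff.2 hπ.2.1)]
  exact hg.continuousOn.integrableOn_compact isCompact_Icc

lemma mk_integral_mem_momentHull (hf : Continuous f) {π : Measure ℝ} (hπ : π ∈ momentClass μ ν) :
    (μ, ν, ∫ q, f q ∂π) ∈ momentHull f := by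
  have := hπ.1
  have hae : ∀ᵐ q ∂π, q ∈ Icc (0 : ℝ) 1 := mem_ae_iff.2 hπ.2.1
  have hcurve : ∫ q, momentCurve f q ∂π = (μ, ν, ∫ q, f q ∂π) := by
    change ∫ q, (q, q ^ 2, f q) ∂π = _
    rw [integral_pair (integrable_of_mem_momentClass continuous_id' hπ)
      (integrable_of_mem_momentClass (g := fun q => (q ^ 2, f q)) (by fun_prop) hπ),
      integral_pair (integrable_of_mem_momentClass (continuous_pow 2) hπ)
      (integrable_of_mem_momentClass hf hπ), hπ.2.2.1, hπ.2.2.2]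
  rw [← hcurve]
  exact Convex.integral_mem (convex_convexHull ℝ _) (isCompact_momentHull hf).isClosed
    (hae.mono fun q hq => subset_convexHull ℝ _ (mem_image_of_mem _ hq))
    (integrable_of_mem_momentClass (by unfold momentCurve; fun_prop) hπ)

lemma momentValues_subset_momentFiber (hf : Continuous f) :
    momentValues f μ ν ⊆ momentFiber f μ ν := by
  rintro _ ⟨π, hπ, rfl⟩
  exact mk_integral_mem_momentHull hf hπ

lemma weightedDirac_mem_momentClass {ι : Type*} [Fintype ι] {w q : ι → ℝ} (hw : ∀ i, 0 ≤ w i)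
    (hw1 : ∑ i, w i = 1) (hq : ∀ i, q i ∈ Icc 0 1) :
    weightedDirac w q ∈ momentClass (∑ i, w i * q i) (∑ i, w i * q i ^ 2) :=
  ⟨isProbabilityMeasure_weightedDirac hw hw1, weightedDirac_compl_eq_zero hq,
    integral_weightedDirac hw _, integral_weightedDirac hw _⟩

lemma momentClass_nonempty (hμ0 : 0 ≤ μ) (hμ1 : μ ≤ 1) (hν1 : μ ^ 2 ≤ ν) (hν2 : ν ≤ μ) :
    (momentClass μ ν).Nonempty := by
  have hν0 : 0 ≤ ν := (sq_nonneg μ).trans hν1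
  -- Two atoms, at `0` and at `ν / μ` with mass `μ ^ 2 / ν`; when `μ = 0` both quotients are
  -- the junk value `0` and this is `dirac 0`, as it should be.
  set t := μ ^ 2 / ν
  set c := ν / μ
  have ht : t ∈ Icc 0 1 := ⟨div_nonneg (sq_nonneg _) hν0, div_le_one_of_le₀ hν1 hν0⟩
  have hc : c ∈ Icc 0 1 := ⟨div_nonneg hν0 hμ0, div_le_one_of_le₀ hν2 hμ0⟩
  have hmoments : t * c = μ ∧ t * c ^ 2 = ν := by
    rcases hμ0.eq_or_lt with rfl | hμ
    · simp [t, le_antisymm hν2 hν0]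
    · have : 0 < ν := (pow_pos hμ 2).trans_le hν1
      constructor <;> simp only [t, c] <;> field_simp
  have hw : ∀ i, 0 ≤ ![1 - t, t] i := by simp [Fin.forall_fin_two, ht.2, ht.1]
  have hq : ∀ i, ![0, c] i ∈ Icc (0 : ℝ) 1 := by simp [Fin.forall_fin_two, hc.1, hc.2]
  refine ⟨weightedDirac ![1 - t, t] ![0, c], ?_⟩
  simpa [Fin.sum_univ_two, hmoments] using
    weightedDirac_mem_momentClass hw (by simp [Fin.sum_univ_two]) hq

lemma exists_threePoint_of_notMem_interior_momentFiber {y : ℝ}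
    (hy : y ∈ momentFiber f μ ν) (hyi : y ∉ interior (momentFiber f μ ν)) :
    ∃ π ∈ momentClass μ ν, (∃ s : Finset ℝ, s.card ≤ 3 ∧ π (↑s)ᶜ = 0) ∧ ∫ q, f q ∂π = y := by
  have hyK : (μ, ν, y) ∉ interior (momentHull f) := fun h =>
    hyi (preimage_interior_subset_interior_preimage (by fun_prop) h)
  obtain ⟨ι, _, z, w, hcard, hzs, hw0, hw1, hwz⟩ :=
    (exists_convexCombination_card_le_finrank_or_mem_interior hy).resolve_right hyK
  choose q hq hqz using fun i => hzs (mem_range_self i)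
  have hcomb : (∑ i, w i * q i, ∑ i, w i * q i ^ 2, ∑ i, w i * f (q i)) = (μ, ν, y) := by
    rw [← hwz, ← funext hqz]
    simp [momentCurve, prod_mk_sum]
  simp only [Prod.mk.injEq] at hcomb
  obtain ⟨rfl, rfl, rfl⟩ := hcomb
  refine ⟨weightedDirac w q, weightedDirac_mem_momentClass hw0 hw1 hq,
    ⟨Finset.univ.image q, Finset.card_image_le.trans (by simpa using hcard),
      weightedDirac_compl_eq_zero fun i => by simp⟩, integral_weightedDirac hw0 f⟩

theorem exists_threePoint_isGreatest_momentValues (hf : Continuous f)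
    (hne : (momentClass μ ν).Nonempty) :
    ∃ π ∈ momentClass μ ν, (∃ s : Finset ℝ, s.card ≤ 3 ∧ π (↑s)ᶜ = 0) ∧
      IsGreatest (momentValues f μ ν) (∫ q, f q ∂π) := by
  obtain ⟨π₀, hπ₀⟩ := hne
  obtain ⟨y, hy, hymax⟩ := (isCompact_momentFiber hf).exists_isGreatest
    ⟨_, mk_integral_mem_momentHull hf hπ₀⟩
  obtain ⟨π, hπ, hsupp, rfl⟩ := exists_threePoint_of_notMem_interior_momentFiber hy
    (notMem_interior_of_mem_upperBounds hymax)
  exact ⟨π, hπ, hsupp, ⟨π, hπ, rfl⟩,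
    upperBounds_mono_set (momentValues_subset_momentFiber hf) hymax⟩

theorem exists_threePoint_isLeast_momentValues (hf : Continuous f)
    (hne : (momentClass μ ν).Nonempty) :
    ∃ π ∈ momentClass μ ν, (∃ s : Finset ℝ, s.card ≤ 3 ∧ π (↑s)ᶜ = 0) ∧
      IsLeast (momentValues f μ ν) (∫ q, f q ∂π) := by
  obtain ⟨π₀, hπ₀⟩ := hne
  obtain ⟨y, hy, hymin⟩ := (isCompact_momentFiber hf).exists_isLeast
    ⟨_, mk_integral_mem_momentHull hf hπ₀⟩
  obtain ⟨π, hπ, hsupp, rfl⟩ := exists_threePoint_of_notMem_interior_momentFiber hy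
    (notMem_interior_of_mem_lowerBounds hymin)
  exact ⟨π, hπ, hsupp, ⟨π, hπ, rfl⟩,
    lowerBounds_mono_set (momentValues_subset_momentFiber hf) hymin⟩

end MomentHull

lemma continuous_Pmaj (n : ℕ) : Continuous (Pmaj n) := by
  unfold Pmaj; fun_prop

theorem three_support_reduction_general (n : ℕ) (μ ν : ℝ)
    (hμ0 : 0 ≤ μ) (hμ1 : μ ≤ 1) (hν1 : μ ^ 2 ≤ ν) (hν2 : ν ≤ μ) :
    (∃ π ∈ momentClass μ ν, (∃ s : Finset ℝ, s.card ≤ 3 ∧ π ((↑s : Set ℝ)ᶜ) = 0) ∧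
        (∫ q, Pmaj n q ∂π) = sSup (voteVals n μ ν)) ∧
    (∃ π ∈ momentClass μ ν, (∃ s : Finset ℝ, s.card ≤ 3 ∧ π ((↑s : Set ℝ)ᶜ) = 0) ∧
        (∫ q, Pmaj n q ∂π) = sInf (voteVals n μ ν)) := by
  have hne := momentClass_nonempty hμ0 hμ1 hν1 hν2
  obtain ⟨π₁, hπ₁, hsupp₁, hmax⟩ :=
    exists_threePoint_isGreatest_momentValues (continuous_Pmaj n) hne
  obtain ⟨π₂, hπ₂, hsupp₂, hmin⟩ :=
    exists_threePoint_isLeast_momentValues (continuous_Pmaj n) hne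
  exact ⟨⟨π₁, hπ₁, hsupp₁, hmax.csSup_eq.symm⟩, ⟨π₂, hπ₂, hsupp₂, hmin.csInf_eq.symm⟩⟩

/-- **Three-support reduction.** For every feasible `(μ, ν)` and every fixed `n ≥ 1`, both
the supremum `U_n(μ,ν)` and the infimum `L_n(μ,ν)` of `∫ P_n dπ` over the two-moment class
are attained, each by a probability measure supported on at most three points of `[0,1]`. -/
theorem three_support_reduction (n : ℕ) (hn : 1 ≤ n) (μ ν : ℝ)
    (hμ0 : 0 ≤ μ) (hμ1 : μ ≤ 1) (hν1 : μ ^ 2 ≤ ν) (hν2 : ν ≤ μ) :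
    (∃ π ∈ momentClass μ ν, (∃ s : Finset ℝ, s.card ≤ 3 ∧ π ((↑s : Set ℝ)ᶜ) = 0) ∧
        (∫ q, Pmaj n q ∂π) = sSup (voteVals n μ ν)) ∧
    (∃ π ∈ momentClass μ ν, (∃ s : Finset ℝ, s.card ≤ 3 ∧ π ((↑s : Set ℝ)ᶜ) = 0) ∧
        (∫ q, Pmaj n q ∂π) = sInf (voteVals n μ ν)) :=
  three_support_reduction_general n μ ν hμ0 hμ1 hν1 hν2
end

section
/- Let 0 < μ < 1 and μ² ≤ ν ≤ μ. With P₁(q) = 3q² − 2q³, the infimum of ∫ P₁(q) dπ(q) over all probability measures π on [0,1] with ∫ q dπ = μ and ∫ q² dπ = ν equals ν + 2(μ−ν)²/(1−μ), and this infimum is attained. -/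
/-!
For every `t`, the quadratic `L_t(q) = (1 - 4t) q² + (2t² + 4t) q - 2t²` satisfies
`P₁ - L_t = 2 (q - t)² (1 - q)`, so it lies below `P₁` on `[0, 1]`, touching it at `t` and `1`.
Integrating gives `∫ P₁ dπ ≥ (1 - 4t) ν + (2t² + 4t) μ - 2t²` for all `π ∈ M(μ, ν)`.
The choice `t = (μ - ν)/(1 - μ)` turns the right side into `ν + 2(μ - ν)²/(1 - μ)`,
and this `t` lies in `[0, μ]`, so the measure on `{t, 1}` with mean `μ` lies in `M(μ, ν)`
and attains the bound.
-/

open MeasureTheory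

/-- The three-vote strict-majority success probability: `P₁(q) = 3q² − 2q³`. -/
def P1 (q : ℝ) : ℝ := 3 * q ^ 2 - 2 * q ^ 3

open Set

lemma Continuous.integrable_of_measure_compl_eq_zero {π : Measure ℝ} [IsFiniteMeasure π]
    {K : Set ℝ} (hK : IsCompact K) (hπ : π Kᶜ = 0) {f : ℝ → ℝ} (hf : Continuous f) :
    Integrable f π := by
  rw [← Measure.restrict_eq_self_of_ae_mem (mem_ae_iff.mpr hπ)]
  exact hf.continuousOn.integrableOn_compact hK

lemma integral_quadratic {π : Measure ℝ} [IsProbabilityMeasure π]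
    (h1 : Integrable (fun q => q) π) (h2 : Integrable (fun q => q ^ 2) π) (a b c : ℝ) :
    ∫ q, (a * q ^ 2 + b * q + c) ∂π = a * ∫ q, q ^ 2 ∂π + b * ∫ q, q ∂π + c := by
  rw [integral_add (f := fun q => a * q ^ 2 + b * q)
      ((h2.const_mul a).add (h1.const_mul b)) (integrable_const c),
    integral_add (h2.const_mul a) (h1.const_mul b), integral_const_mul, integral_const_mul,
    integral_const, probReal_univ, one_smul]

lemma P1_sub_quadratic (t q : ℝ) :
    P1 q - ((1 - 4 * t) * q ^ 2 + (2 * t ^ 2 + 4 * t) * q + -2 * t ^ 2) =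
      2 * (q - t) ^ 2 * (1 - q) := by
  unfold P1; ring

lemma quadratic_moment_le_integral_P1 {π : Measure ℝ} [IsProbabilityMeasure π]
    (hπ : π (Icc 0 1)ᶜ = 0) (t : ℝ) :
    (1 - 4 * t) * ∫ q, q ^ 2 ∂π + (2 * t ^ 2 + 4 * t) * ∫ q, q ∂π + -2 * t ^ 2 ≤
      ∫ q, P1 q ∂π := by
  have integrable {f : ℝ → ℝ} (hf : Continuous f) : Integrable f π :=
    hf.integrable_of_measure_compl_eq_zero isCompact_Icc hπ
  have h1 : Integrable (fun q : ℝ => q) π := integrable continuous_id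
  have h2 : Integrable (fun q : ℝ => q ^ 2) π := integrable (continuous_pow 2)
  rw [← integral_quadratic h1 h2]
  refine integral_mono_ae (integrable (by fun_prop)) (integrable (by unfold P1; fun_prop)) ?_
  filter_upwards [mem_ae_iff.mpr hπ] with q hq
  have hgap : 0 ≤ 2 * (q - t) ^ 2 * (1 - q) := mul_nonneg (by positivity) (sub_nonneg.2 hq.2)
  linarith [P1_sub_quadratic t q]

noncomputable def twoPointMeasure (w a b : ℝ) : Measure ℝ :=
  ENNReal.ofReal w • Measure.dirac a + ENNReal.ofReal (1 - w) • Measure.dirac b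

section TwoPoint

variable {w : ℝ} (a b : ℝ)

lemma isProbabilityMeasure_twoPointMeasure (hw0 : 0 ≤ w) (hw1 : w ≤ 1) :
    IsProbabilityMeasure (twoPointMeasure w a b) := by
  constructor
  simp only [twoPointMeasure, Measure.add_apply, Measure.smul_apply, measure_univ, smul_eq_mul,
    mul_one]
  rw [← ENNReal.ofReal_add hw0 (by linarith), add_sub_cancel, ENNReal.ofReal_one]

lemma twoPointMeasure_compl_eq_zero {s : Set ℝ} (hs : MeasurableSet s) (ha : a ∈ s)
    (hb : b ∈ s) :
    twoPointMeasure w a b sᶜ = 0 := by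
  simp [twoPointMeasure, Measure.dirac_apply' _ hs.compl, ha, hb]

lemma integral_twoPointMeasure (hw0 : 0 ≤ w) (hw1 : w ≤ 1) (f : ℝ → ℝ) :
    ∫ q, f q ∂twoPointMeasure w a b = w * f a + (1 - w) * f b := by
  have integrable_dirac (x : ℝ) : Integrable f (Measure.dirac x) :=
    (integrable_const (f x)).congr (ae_eq_dirac f).symm
  rw [twoPointMeasure, integral_add_measure
    ((integrable_dirac a).smul_measure ENNReal.ofReal_ne_top)
    ((integrable_dirac b).smul_measure ENNReal.ofReal_ne_top),
    integral_smul_measure, integral_smul_measure, integral_dirac, integral_dirac,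
    ENNReal.toReal_ofReal hw0, ENNReal.toReal_ofReal (by linarith), smul_eq_mul, smul_eq_mul]

end TwoPoint

theorem three_vote_lower_general (μ ν : ℝ) (hμ1 : μ < 1)
    (hν1 : μ ^ 2 ≤ ν) (hν2 : ν ≤ μ) :
    IsLeast {x | ∃ π : Measure ℝ, IsProbabilityMeasure π ∧
        π ((Set.Icc (0 : ℝ) 1)ᶜ) = 0 ∧ (∫ q, q ∂π) = μ ∧ (∫ q, q ^ 2 ∂π) = ν ∧
        (∫ q, P1 q ∂π) = x}
      (ν + 2 * (μ - ν) ^ 2 / (1 - μ)) := by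
  have h1μ : 0 < 1 - μ := by linarith
  obtain ⟨t, ht⟩ : ∃ t, t * (1 - μ) = μ - ν := ⟨_, div_mul_cancel₀ _ h1μ.ne'⟩
  have ht0 : 0 ≤ t := (mul_nonneg_iff_of_pos_right h1μ).mp (by linarith)
  have htμ : t ≤ μ := le_of_mul_le_mul_right (by nlinarith) h1μ
  have value : ν + 2 * (μ - ν) ^ 2 / (1 - μ) =
      (1 - 4 * t) * ν + (2 * t ^ 2 + 4 * t) * μ + -2 * t ^ 2 := by
    rw [← ht]; field_simp; linear_combination (4 * t) * ht
  constructor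
  · have h1t : 0 < 1 - t := by linarith
    obtain ⟨w, hw⟩ : ∃ w, w * (1 - t) = 1 - μ := ⟨_, div_mul_cancel₀ _ h1t.ne'⟩
    have hw0 : 0 ≤ w := (mul_nonneg_iff_of_pos_right h1t).mp (by linarith)
    have hw1 : w ≤ 1 := le_of_mul_le_mul_right (by linarith) h1t
    refine ⟨twoPointMeasure w t 1, isProbabilityMeasure_twoPointMeasure t 1 hw0 hw1,
      twoPointMeasure_compl_eq_zero t 1 measurableSet_Icc ⟨ht0, by linarith⟩
        (right_mem_Icc.2 zero_le_one),
      ?_, ?_, ?_⟩ <;> rw [integral_twoPointMeasure t 1 hw0 hw1]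
    · linear_combination -hw
    · linear_combination (-(1 + t)) * hw - ht
    · rw [value]; unfold P1; linear_combination (-(1 + t - 2 * t ^ 2)) * hw + (4 * t - 1) * ht
  · rintro x ⟨π, hπ, hsupp, hm1, hm2, rfl⟩
    rw [value, ← hm1, ← hm2]
    exact quadratic_moment_le_integral_P1 hsupp t

/-- **Sharp three-vote lower endpoint.** For `0 < μ < 1` and `μ² ≤ ν ≤ μ`, the infimum of
`∫ P₁ dπ` over all probability measures `π` on `[0,1]` with first moment `μ` and second
moment `ν` equals `ν + 2(μ−ν)²/(1−μ)`, and it is attained. -/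
theorem three_vote_lower (μ ν : ℝ) (hμ0 : 0 < μ) (hμ1 : μ < 1)
    (hν1 : μ ^ 2 ≤ ν) (hν2 : ν ≤ μ) :
    IsLeast {x | ∃ π : Measure ℝ, IsProbabilityMeasure π ∧
        π ((Set.Icc (0 : ℝ) 1)ᶜ) = 0 ∧ (∫ q, q ∂π) = μ ∧ (∫ q, q ^ 2 ∂π) = ν ∧
        (∫ q, P1 q ∂π) = x}
      (ν + 2 * (μ - ν) ^ 2 / (1 - μ)) :=
  three_vote_lower_general μ ν hμ1 hν1 hν2
end

section
/- Let 0 < μ < 1 and μ² ≤ ν ≤ μ. With P₁(q) = 3q² − 2q³, the supremum of ∫ P₁(q) dπ(q) over all probability measures π on [0,1] with ∫ q dπ = μ and ∫ q² dπ = ν equals 3ν − 2ν²/μ, and this supremum is attained. -/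
/-!
For `q ≥ 0` and any `a`, `(3 - 4a) q² + 2a² q - P₁(q) = 2q (q - a)² ≥ 0`. Integrating against a law
on `[0,1]` bounds `∫ P₁` by `(3 - 4a) ν + 2a² μ`, which for `a = ν/μ` is `3ν - 2ν²/μ`. The bound
is attained by a law concentrated on the zeros `{0, a}` of the gap; the moment conditions force the
mass `μ²/ν` at `a`.
-/

open MeasureTheory

open Set

noncomputable def twoPoint {α : Type*} [MeasurableSpace α] (p : ℝ) (a b : α) : Measure α :=
  ENNReal.ofReal p • Measure.dirac a + ENNReal.ofReal (1 - p) • Measure.dirac b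

section TwoPoint

variable {α : Type*} [MeasurableSpace α] {p : ℝ} (a b : α)

lemma isProbabilityMeasure_twoPoint (hp0 : 0 ≤ p) (hp1 : p ≤ 1) :
    IsProbabilityMeasure (twoPoint p a b) := by
  constructor
  simp only [twoPoint, Measure.add_apply, Measure.smul_apply, measure_univ, smul_eq_mul, mul_one]
  rw [← ENNReal.ofReal_add hp0 (sub_nonneg.2 hp1), add_sub_cancel, ENNReal.ofReal_one]

lemma twoPoint_apply_eq_zero {s : Set α} (hs : MeasurableSet s) (ha : a ∉ s) (hb : b ∉ s) :
    twoPoint p a b s = 0 := by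
  simp [twoPoint, Measure.dirac_apply' _ hs, ha, hb]

lemma integral_twoPoint [MeasurableSingletonClass α] {E : Type*} [NormedAddCommGroup E]
    [NormedSpace ℝ E] [CompleteSpace E] (hp0 : 0 ≤ p) (hp1 : p ≤ 1) (f : α → E) :
    ∫ x, f x ∂twoPoint p a b = p • f a + (1 - p) • f b := by
  rw [twoPoint, integral_add_measure
    ((integrable_dirac enorm_lt_top).smul_measure ENNReal.ofReal_ne_top)
    ((integrable_dirac enorm_lt_top).smul_measure ENNReal.ofReal_ne_top),
    integral_smul_measure, integral_smul_measure, integral_dirac, integral_dirac,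
    ENNReal.toReal_ofReal hp0, ENNReal.toReal_ofReal (sub_nonneg.2 hp1)]

end TwoPoint

lemma Continuous.integrable_of_ae_mem_Icc {f : ℝ → ℝ} (hf : Continuous f) {π : Measure ℝ}
    [IsFiniteMeasure π] {a b : ℝ} (h : ∀ᵐ q ∂π, q ∈ Icc a b) : Integrable f π := by
  rw [← Measure.restrict_eq_self_of_ae_mem h]
  exact hf.integrableOn_Icc

lemma P1_le_of_nonneg (a : ℝ) {q : ℝ} (hq : 0 ≤ q) :
    P1 q ≤ (3 - 4 * a) * q ^ 2 + 2 * a ^ 2 * q := by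
  have hgap : (3 - 4 * a) * q ^ 2 + 2 * a ^ 2 * q - P1 q = 2 * q * (q - a) ^ 2 := by
    unfold P1; ring
  linarith [mul_nonneg (mul_nonneg zero_le_two hq) (sq_nonneg (q - a))]

lemma integral_P1_le (π : Measure ℝ) [IsFiniteMeasure π] (hπ : ∀ᵐ q ∂π, q ∈ Icc (0 : ℝ) 1)
    (a : ℝ) : ∫ q, P1 q ∂π ≤ (3 - 4 * a) * ∫ q, q ^ 2 ∂π + 2 * a ^ 2 * ∫ q, q ∂π := by
  have hint {f : ℝ → ℝ} (hf : Continuous f) : Integrable f π := hf.integrable_of_ae_mem_Icc hπ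
  rw [← integral_const_mul, ← integral_const_mul,
    ← integral_add (hint (by fun_prop)) (hint (by fun_prop))]
  exact integral_mono_ae (hint (by unfold P1; fun_prop)) (hint (by fun_prop))
    (hπ.mono fun q hq => P1_le_of_nonneg a hq.1)

theorem three_vote_upper_general (μ ν : ℝ) (hμ0 : 0 < μ)
    (hν1 : μ ^ 2 ≤ ν) (hν2 : ν ≤ μ) :
    IsGreatest {x | ∃ π : Measure ℝ, IsProbabilityMeasure π ∧
        π ((Set.Icc (0 : ℝ) 1)ᶜ) = 0 ∧ (∫ q, q ∂π) = μ ∧ (∫ q, q ^ 2 ∂π) = ν ∧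
        (∫ q, P1 q ∂π) = x}
      (3 * ν - 2 * ν ^ 2 / μ) := by
  have hν0 : 0 < ν := (pow_pos hμ0 2).trans_le hν1
  have hbound : (3 - 4 * (ν / μ)) * ν + 2 * (ν / μ) ^ 2 * μ = 3 * ν - 2 * ν ^ 2 / μ := by
    field_simp; ring
  refine ⟨?_, ?_⟩
  · have hp0 : 0 ≤ μ ^ 2 / ν := by positivity
    have hp1 : μ ^ 2 / ν ≤ 1 := (div_le_one hν0).2 hν1
    have ha : ν / μ ∈ Icc (0 : ℝ) 1 := ⟨by positivity, (div_le_one hμ0).2 hν2⟩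
    refine ⟨twoPoint (μ ^ 2 / ν) (ν / μ) 0, isProbabilityMeasure_twoPoint _ _ hp0 hp1,
      twoPoint_apply_eq_zero _ _ measurableSet_Icc.compl (not_not.2 ha)
        (not_not.2 ⟨le_rfl, zero_le_one⟩), ?_, ?_, ?_⟩ <;>
    · simp only [integral_twoPoint _ _ hp0 hp1, smul_eq_mul, P1]
      field_simp
      ring
  · rintro x ⟨π, hprob, hsupp, hmean, hsq, rfl⟩
    have hae : ∀ᵐ q ∂π, q ∈ Icc (0 : ℝ) 1 := measure_eq_zero_iff_ae_notMem.1 hsupp |>.mono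
      fun _ => not_not.1
    calc ∫ q, P1 q ∂π ≤ (3 - 4 * (ν / μ)) * ∫ q, q ^ 2 ∂π + 2 * (ν / μ) ^ 2 * ∫ q, q ∂π :=
          integral_P1_le π hae (ν / μ)
      _ = 3 * ν - 2 * ν ^ 2 / μ := by rw [hmean, hsq, hbound]

/-- **Sharp three-vote upper endpoint.** For `0 < μ < 1` and `μ² ≤ ν ≤ μ`, the supremum of
`∫ P₁ dπ` over all probability measures `π` on `[0,1]` with first moment `μ` and second
moment `ν` equals `3ν − 2ν²/μ`, and it is attained. -/
theorem three_vote_upper (μ ν : ℝ) (hμ0 : 0 < μ) (hμ1 : μ < 1)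
    (hν1 : μ ^ 2 ≤ ν) (hν2 : ν ≤ μ) :
    IsGreatest {x | ∃ π : Measure ℝ, IsProbabilityMeasure π ∧
        π ((Set.Icc (0 : ℝ) 1)ᶜ) = 0 ∧ (∫ q, q ∂π) = μ ∧ (∫ q, q ^ 2 ∂π) = ν ∧
        (∫ q, P1 q ∂π) = x}
      (3 * ν - 2 * ν ^ 2 / μ) :=
  three_vote_upper_general μ ν hμ0 hν1 hν2
end

section
/- Let 1/2 < μ < 1 and ρ ∈ [0,1], and set ν = μ² + ρμ(1−μ). Then the identity L₁(μ,ν) − μ = μ(1−μ)(1−ρ)·(2μ(1−ρ) − 1) holds, and ∫ P₁(q) dπ(q) > μ for every probability measure π on [0,1] with first moment μ and second moment ν if and only if ρ < 1 − 1/(2μ). -/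
open MeasureTheory

/-- The closed-form three-vote lower endpoint `L₁(μ,ν) = ν + 2(μ−ν)²/(1−μ)`. -/
noncomputable def L1 (μ ν : ℝ) : ℝ := ν + 2 * (μ - ν) ^ 2 / (1 - μ)

lemma contP1 : Continuous P1 := by
  unfold P1
  exact (continuous_const.mul (continuous_pow 2)).sub (continuous_const.mul (continuous_pow 3))

lemma integrable_dirac' {f : ℝ → ℝ} (hf : Continuous f) (x : ℝ) :
    Integrable f (Measure.dirac x) := by
  refine (integrable_const (f x)).congr ?_
  rw [Filter.EventuallyEq, ae_dirac_eq]
  simp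

lemma integrable_of_bound {f : ℝ → ℝ} (hf : Continuous f) (C : ℝ)
    (hC : ∀ q ∈ Set.Icc (0:ℝ) 1, ‖f q‖ ≤ C)
    (π : Measure ℝ) [IsProbabilityMeasure π] (hsupp : π ((Set.Icc (0 : ℝ) 1)ᶜ) = 0) :
    Integrable f π := by
  have hae : ∀ᵐ q ∂π, q ∈ Set.Icc (0:ℝ) 1 := by
    rw [MeasureTheory.ae_iff]
    exact hsupp
  exact (integrable_const C).mono' hf.aestronglyMeasurable
    (hae.mono fun q hq => hC q hq)

set_option maxHeartbeats 1000000 in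
/-- **Certified three-vote improvement.** Let `1/2 < μ < 1`, `ρ ∈ [0,1]`, and
`ν = μ² + ρμ(1−μ)`.  Then `L₁(μ,ν) − μ = μ(1−μ)(1−ρ)(2μ(1−ρ) − 1)`, and
`∫ P₁ dπ > μ` for every probability measure `π` on `[0,1]` with first moment `μ` and
second moment `ν` if and only if `ρ < 1 − 1/(2μ)`. -/
theorem certified_improvement (μ ρ ν : ℝ) (hμ0 : 1 / 2 < μ) (hμ1 : μ < 1)
    (hρ0 : 0 ≤ ρ) (hρ1 : ρ ≤ 1) (hν : ν = μ ^ 2 + ρ * μ * (1 - μ)) :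
    L1 μ ν - μ = μ * (1 - μ) * (1 - ρ) * (2 * μ * (1 - ρ) - 1) ∧
    ((∀ π : Measure ℝ, IsProbabilityMeasure π → π ((Set.Icc (0 : ℝ) 1)ᶜ) = 0 →
        (∫ q, q ∂π) = μ → (∫ q, q ^ 2 ∂π) = ν → μ < ∫ q, P1 q ∂π) ↔
      ρ < 1 - 1 / (2 * μ)) := by
  have hμpos : (0:ℝ) < μ := by linarith
  have h1μ : (0:ℝ) < 1 - μ := by linarith
  have hid : L1 μ ν - μ = μ * (1 - μ) * (1 - ρ) * (2 * μ * (1 - ρ) - 1) := by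
    rw [L1, hν]
    field_simp
    ring
  refine ⟨hid, ?_, ?_⟩
  · -- forward: contrapositive via a two-point measure
    intro hall
    by_contra hge
    push_neg at hge
    set x : ℝ := μ * (1 - ρ) with hx
    have hx0 : 0 ≤ x := by
      have : 0 ≤ 1 - ρ := by linarith
      positivity
    have hxhalf : x ≤ 1 / 2 := by
      have h2μ : (0:ℝ) < 2 * μ := by linarith
      have h' : 1 - ρ ≤ 1 / (2 * μ) := by linarith
      calc x ≤ μ * (1 / (2 * μ)) := by
              exact mul_le_mul_of_nonneg_left h' (le_of_lt hμpos)
        _ = 1 / 2 := by field_simp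
    have hx1 : x < 1 := by linarith
    have hd : (0:ℝ) < 1 - x := by linarith
    set p : ℝ := (μ - x) / (1 - x) with hp
    have hμx : x ≤ μ := by nlinarith
    have hp0 : 0 ≤ p := div_nonneg (by linarith) (le_of_lt hd)
    have hp1 : p ≤ 1 := by
      rw [hp, div_le_one hd]; linarith
    have hpx : p * (1 - x) = μ - x := by
      rw [hp]; field_simp
    have hνx : ν = μ - (1 - μ) * x := by rw [hν, hx]; ring
    set π : Measure ℝ := ENNReal.ofReal p • Measure.dirac 1
        + ENNReal.ofReal (1 - p) • Measure.dirac x with hπ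
    have hprob : IsProbabilityMeasure π := by
      constructor
      rw [hπ, Measure.add_apply, Measure.smul_apply, Measure.smul_apply,
        measure_univ, measure_univ, smul_eq_mul, smul_eq_mul, mul_one, mul_one,
        ← ENNReal.ofReal_add hp0 (by linarith)]
      norm_num
    have hint : ∀ f : ℝ → ℝ, Continuous f →
        (∫ q, f q ∂π) = p * f 1 + (1 - p) * f x := by
      intro f hf
      rw [hπ, integral_add_measure, integral_smul_measure, integral_smul_measure,
        integral_dirac, integral_dirac]
      · simp only [smul_eq_mul]
        rw [ENNReal.toReal_ofReal hp0, ENNReal.toReal_ofReal (by linarith : (0:ℝ) ≤ 1 - p)]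
      · exact ((integrable_dirac' hf 1).smul_measure ENNReal.ofReal_ne_top)
      · exact ((integrable_dirac' hf x).smul_measure ENNReal.ofReal_ne_top)
    have hsupp : π ((Set.Icc (0 : ℝ) 1)ᶜ) = 0 := by
      rw [hπ]
      have hmem1 : (1:ℝ) ∈ Set.Icc (0:ℝ) 1 := by norm_num
      have hmemx : x ∈ Set.Icc (0:ℝ) 1 := ⟨hx0, le_of_lt hx1⟩
      have hms : MeasurableSet ((Set.Icc (0:ℝ) 1)ᶜ) := (measurableSet_Icc).compl
      simp only [Measure.coe_add, Measure.coe_smul, Pi.add_apply, Pi.smul_apply,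
        Measure.dirac_apply' _ hms, smul_eq_mul]
      rw [Set.indicator_of_notMem (by simpa using hmem1),
        Set.indicator_of_notMem (by simpa using hmemx)]
      simp
    have hm1 : (∫ q, q ∂π) = μ := by
      rw [hint (fun q => q) continuous_id]
      linear_combination hpx
    have hm2 : (∫ q, q ^ 2 ∂π) = ν := by
      rw [hint (fun q => q ^ 2) (continuous_pow 2), hνx]
      linear_combination (1 + x) * hpx
    have hP : (∫ q, P1 q ∂π) ≤ μ := by
      rw [hint P1 contP1]
      unfold P1
      norm_num
      have hkey : 3 * x ^ 2 - 2 * x ^ 3 ≤ x := by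
        nlinarith [mul_nonneg (mul_nonneg hx0 (by linarith : (0:ℝ) ≤ 1 - x))
          (by linarith : (0:ℝ) ≤ 1 - 2 * x)]
      have h1p : 0 ≤ 1 - p := by linarith
      have step : (1 - p) * (3 * x ^ 2 - 2 * x ^ 3) ≤ (1 - p) * x :=
        mul_le_mul_of_nonneg_left hkey h1p
      nlinarith [hpx]
    have := hall π hprob hsupp hm1 hm2
    linarith
  · -- reverse: the quadratic minorant
    intro hlt π hπprob hsupp hm1 hm2
    haveI := hπprob
    set t : ℝ := (μ - ν) / (1 - μ) with ht
    have hae : ∀ᵐ q ∂π, q ∈ Set.Icc (0:ℝ) 1 := by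
      rw [MeasureTheory.ae_iff]; exact hsupp
    have hTle : ∀ q ∈ Set.Icc (0:ℝ) 1,
        (1 - 4*t) * q ^ 2 + (2*t^2 + 4*t) * q - 2*t^2 ≤ P1 q := by
      intro q hq
      obtain ⟨hq0, hq1⟩ := hq
      have hdiff : P1 q - ((1 - 4*t) * q ^ 2 + (2*t^2 + 4*t) * q - 2*t^2)
          = -2 * (q - 1) * (q - t)^2 := by unfold P1; ring
      nlinarith [mul_nonneg (sub_nonneg.2 hq1) (sq_nonneg (q - t))]
    have hi1 : Integrable (fun q : ℝ => q) π :=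
      integrable_of_bound continuous_id' 1
        (fun q hq => by rw [Real.norm_eq_abs, abs_le]; exact ⟨by linarith [hq.1], hq.2⟩) π hsupp
    have hi2 : Integrable (fun q : ℝ => q ^ 2) π :=
      integrable_of_bound (continuous_pow 2) 1
        (fun q hq => by
          rw [Real.norm_eq_abs, abs_le]
          constructor <;> nlinarith [hq.1, hq.2]) π hsupp
    have hiP : Integrable P1 π :=
      integrable_of_bound contP1 5
        (fun q hq => by
          rw [Real.norm_eq_abs, abs_le]
          unfold P1
          constructor <;> nlinarith [hq.1, hq.2]) π hsupp
    have hA : Integrable (fun q : ℝ => (1 - 4*t) * q ^ 2) π := hi2.const_mul _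
    have hB : Integrable (fun q : ℝ => (2*t^2 + 4*t) * q) π := hi1.const_mul _
    have hAB : Integrable (fun q : ℝ => (1 - 4*t) * q ^ 2 + (2*t^2 + 4*t) * q) π := hA.add hB
    have hiT : Integrable (fun q : ℝ => (1 - 4*t) * q ^ 2 + (2*t^2 + 4*t) * q - 2*t^2) π :=
      hAB.sub (integrable_const _)
    have hmono : (∫ q, ((1 - 4*t) * q ^ 2 + (2*t^2 + 4*t) * q - 2*t^2) ∂π)
        ≤ ∫ q, P1 q ∂π := by
      apply integral_mono_ae hiT hiP
      exact hae.mono fun q hq => hTle q hq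
    have hTint : (∫ q, ((1 - 4*t) * q ^ 2 + (2*t^2 + 4*t) * q - 2*t^2) ∂π)
        = (1 - 4*t) * ν + (2*t^2 + 4*t) * μ - 2*t^2 := by
      rw [integral_sub hAB (integrable_const _), integral_add hA hB,
        integral_const_mul, integral_const_mul, integral_const, hm1, hm2]
      simp
    have hTL : (1 - 4*t) * ν + (2*t^2 + 4*t) * μ - 2*t^2 = L1 μ ν := by
      rw [ht, L1]
      field_simp
      ring
    have hLμ : μ < L1 μ ν := by
      have h1ρ : 0 < 1 - ρ := by
        have hpos : 0 < 1 / (2 * μ) := by positivity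
        linarith
      have h2 : 0 < 2 * μ * (1 - ρ) - 1 := by
        have h2μ : (0:ℝ) < 2 * μ := by linarith
        have h' : 1 / (2 * μ) < 1 - ρ := by linarith
        have := (div_lt_iff₀ h2μ).mp h'
        nlinarith
      nlinarith [mul_pos (mul_pos (mul_pos hμpos h1μ) h1ρ) h2]
    calc μ < L1 μ ν := hLμ
      _ = _ := hTL.symm
      _ ≤ _ := hTint ▸ hmono
end
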